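/- Let λ₁,…,λ_{d+1} be barycentric coordinates on a nondegenerate d-simplex with vertices a₁,…,a_{d+1}, e_{ij} = a_j − a_i, and define φ_{ij} = ½(λᵢλⱼ + λᵢ²λⱼ − λᵢλⱼ²) for i ≠ j. Then φ_{ij}(a_k) = 0 for all k, and (e_{kl}·∇)φ_{ij}(a_k) = δ_{ik}δ_{jl} for all k ≠ l. That is, φ_{ij} is the TRUNC nodal basis function dual to the degree of freedom (e_{ij}·∇)p(aᵢ). -/

import Mathlib

/-!
Write `φ_{ij} = ½ (λᵢλⱼ)(1 + λᵢ − λⱼ)`. The factor `λᵢλⱼ` vanishes at every vertex, so `φ_{ij}`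
does too, and at a vertex only the derivative of that factor survives:
`(e_{kl}·∇)φ_{ij}(a_k) = ½ (δ_{ik}δ_{jl} + δ_{il}δ_{jk}) (1 + δ_{ik} − δ_{jk})`, which is `δ_{ik}δ_{jl}`
because `δ_{il}δ_{jk} = 1` forces `1 + δ_{ik} − δ_{jk} = 0`.
-/

theorem AffineMap.hasFDerivAt_of_finiteDimensional {𝕜 E F : Type*} [NontriviallyNormedField 𝕜]
    [CompleteSpace 𝕜] [NormedAddCommGroup E] [NormedSpace 𝕜 E] [FiniteDimensional 𝕜 E]
    [NormedAddCommGroup F] [NormedSpace 𝕜 F] (f : E →ᵃ[𝕜] F) (x : E) :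
    HasFDerivAt f (LinearMap.toContinuousLinearMap f.linear) x :=
  (⟨f, f.continuous_of_finiteDimensional⟩ : E →ᴬ[𝕜] F).hasFDerivAt

theorem HasFDerivAt.mul_of_left_eq_zero {𝕜 E 𝔸 : Type*} [NontriviallyNormedField 𝕜]
    [NormedAddCommGroup E] [NormedSpace 𝕜 E] [NormedCommRing 𝔸] [NormedAlgebra 𝕜 𝔸]
    {u w : E → 𝔸} {u' w' : E →L[𝕜] 𝔸} {x : E} (hu : HasFDerivAt u u' x)
    (hw : HasFDerivAt w w' x) (hux : u x = 0) :
    HasFDerivAt (u * w) (w x • u') x := by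
  convert hu.mul hw using 1
  ext v
  simp [hux]

theorem AffineMap.hasFDerivAt_mul {𝕜 E : Type*} [NontriviallyNormedField 𝕜] [CompleteSpace 𝕜]
    [NormedAddCommGroup E] [NormedSpace 𝕜 E] [FiniteDimensional 𝕜 E] (f g : E →ᵃ[𝕜] 𝕜) (x : E) :
    HasFDerivAt (fun y => f y * g y)
      (g x • LinearMap.toContinuousLinearMap f.linear
        + f x • LinearMap.toContinuousLinearMap g.linear) x := by
  rw [add_comm]
  exact (f.hasFDerivAt_of_finiteDimensional x).mul (g.hasFDerivAt_of_finiteDimensional x)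

section Barycentric

variable {E ι : Type*} [NormedAddCommGroup E] [NormedSpace ℝ E] [DecidableEq ι] {a : ι → E}
  {lam : ι → E →ᵃ[ℝ] ℝ}

theorem barycentric_mul_apply_vertex_eq_zero (hlam : ∀ i j, lam i (a j) = if i = j then 1 else 0)
    {i j : ι} (hij : i ≠ j) (k : ι) : lam i (a k) * lam j (a k) = 0 := by
  rw [hlam, hlam]
  split_ifs with hik hjk <;> simp_all

theorem fderiv_barycentric_mul_edge [FiniteDimensional ℝ E]
    (hlam : ∀ i j, lam i (a j) = if i = j then 1 else 0)
    {i j : ι} (hij : i ≠ j) (k l : ι) :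
    fderiv ℝ (fun y => lam i y * lam j y) (a k) (a l - a k)
      = (if i = k then 1 else 0) * (if j = l then 1 else 0)
        + (if i = l then 1 else 0) * (if j = k then 1 else 0) := by
  rw [((lam i).hasFDerivAt_mul (lam j) (a k)).fderiv]
  simp only [add_apply, smul_apply,
    LinearMap.coe_toContinuousLinearMap', ← vsub_eq_sub, AffineMap.linearMap_vsub, smul_eq_mul,
    hlam]
  split_ifs <;> simp_all

end Barycentric

theorem trunc_basis_edge_derivative_general (d : ℕ)
    (a : Fin (d + 1) → EuclideanSpace ℝ (Fin d))
    (lam : Fin (d + 1) → (EuclideanSpace ℝ (Fin d) →ᵃ[ℝ] ℝ))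
    (hlam : ∀ i j, lam i (a j) = if i = j then 1 else 0)
    (i j : Fin (d + 1)) (hij : i ≠ j)
    (phi : EuclideanSpace ℝ (Fin d) → ℝ)
    (hphi : phi = fun y =>
      (1 / 2 : ℝ) * (lam i y * lam j y + (lam i y) ^ 2 * lam j y - lam i y * (lam j y) ^ 2)) :
    (∀ k, phi (a k) = 0) ∧
    (∀ k l, k ≠ l → fderiv ℝ phi (a k) (a l - a k)
      = (if i = k then (1 : ℝ) else 0) * (if j = l then (1 : ℝ) else 0)) := by
  have hphi_factor :
      phi = fun y => (1 / 2 : ℝ) * ((lam i y * lam j y) * (1 + lam i y - lam j y)) := by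
    rw [hphi]; ext y; ring
  have hvanish := barycentric_mul_apply_vertex_eq_zero hlam hij
  refine ⟨fun k => by simp [hphi_factor, hvanish], fun k l _ => ?_⟩
  have hderiv : HasFDerivAt phi ((1 / 2 : ℝ) • ((1 + lam i (a k) - lam j (a k)) •
      fderiv ℝ (fun y => lam i y * lam j y) (a k))) (a k) := by
    have hmul := ((lam i).hasFDerivAt_mul (lam j) (a k)).differentiableAt.hasFDerivAt
    have hfactor :=
      (AffineMap.const ℝ _ (1 : ℝ) + lam i - lam j).hasFDerivAt_of_finiteDimensional (a k)
    rw [hphi_factor]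
    exact (hmul.mul_of_left_eq_zero hfactor (hvanish k)).const_mul (1 / 2 : ℝ)
  rw [hderiv.fderiv]
  simp only [smul_apply, fderiv_barycentric_mul_edge hlam hij, hlam, smul_eq_mul]
  split_ifs <;> simp_all
  norm_num

/-- `φ_{ij} = ½(λᵢλⱼ + λᵢ²λⱼ − λᵢλⱼ²)` is the TRUNC nodal basis function dual to the
degree of freedom `(e_{ij}·∇)p(aᵢ)`: it vanishes at every vertex and
`(e_{kl}·∇)φ_{ij}(a_k) = δ_{ik}δ_{jl}`. -/
theorem trunc_basis_edge_derivative (d : ℕ)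
    (a : Fin (d + 1) → EuclideanSpace ℝ (Fin d))
    (hInd : AffineIndependent ℝ a)
    (lam : Fin (d + 1) → (EuclideanSpace ℝ (Fin d) →ᵃ[ℝ] ℝ))
    (hlam : ∀ i j, lam i (a j) = if i = j then 1 else 0)
    (i j : Fin (d + 1)) (hij : i ≠ j)
    (phi : EuclideanSpace ℝ (Fin d) → ℝ)
    (hphi : phi = fun y =>
      (1 / 2 : ℝ) * (lam i y * lam j y + (lam i y) ^ 2 * lam j y - lam i y * (lam j y) ^ 2)) :
    (∀ k, phi (a k) = 0) ∧
    (∀ k l, k ≠ l → fderiv ℝ phi (a k) (a l - a k)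
      = (if i = k then (1 : ℝ) else 0) * (if j = l then (1 : ℝ) else 0)) :=
  trunc_basis_edge_derivative_general d a lam hlam i j hij phi hphi
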